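/- Suppose α2·β2 = α1·β1. Then for every y0 with max(δ, δ^(β1/α2)) < y0 < 1, the point (1, y0; E) lies on a period-two orbit of the Poincaré map g: g(1, y0; E) = (y0^(α2/β1), 1; R) and g(y0^(α2/β1), 1; R) = (1, y0; E). Consequently g∘g is the identity on the set {(1, y; E) : max(δ, δ^(β1/α2)) < y < 1}, so there are infinitely many period-two orbits; each is stable but, since a whole interval of such orbits coexists, none is asymptotically stable. -/
import Mathlib


/-- The discrete state of a cow: eating, resting (lying down), or standing. -/
inductive CowState
  | E | R | S
deriving DecidableEq

open CowState

/-- The Poincaré map `g` of the single-cow model, acting on points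
`(x, y; θ)` of the boundary of the square `[δ,1]²` together with a state label.
Powers are real powers (`Real.rpow`). -/
noncomputable def g (α1 α2 β1 β2 δ : ℝ) : ℝ × ℝ × CowState → ℝ × ℝ × CowState
  | (_x, y, .E) =>
      if δ ^ (β1 / α2) ≤ y then (y ^ (α2 / β1), 1, R)
      else (δ, δ ^ (-(β1 / α2)) * y, S)
  | (x, _y, .R) =>
      if δ ^ (α1 / β2) ≤ x then (1, x ^ (β2 / α1), E)
      else (δ ^ (-(α1 / β2)) * x, δ, S)
  | (x, y, .S) =>
      if x = δ then
        -- on the edge `x = δ`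
        (if y ≤ δ ^ (β1 / α1) then (1, δ ^ (-(β1 / α1)) * y, E)
         else (y ^ (-(α1 / β1)) * δ, 1, R))
      else
        -- on the edge `y = δ`
        (if δ ^ (α1 / β1) ≤ x then (1, x ^ (-(β1 / α1)) * δ, E)
         else (δ ^ (-(α1 / β1)) * x, 1, R))

/-- The Poincaré section `Σ = {(1,y;E) : δ ≤ y ≤ 1} ∪ {(x,1;R) : δ ≤ x < 1}`. -/
def inSigma (δ : ℝ) : ℝ × ℝ × CowState → Prop
  | (x, y, .E) => x = 1 ∧ δ ≤ y ∧ y ≤ 1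
  | (x, y, .R) => δ ≤ x ∧ x < 1 ∧ y = 1
  | (_, _, .S) => False

/-- The first-return map `f` on the Poincaré section `Σ`:
`f(w) = g(w)` if `g(w) ∈ Σ`, and `f(w) = g(g(w))` otherwise. -/
noncomputable def f (α1 α2 β1 β2 δ : ℝ) (w : ℝ × ℝ × CowState) : ℝ × ℝ × CowState := by
  classical
  exact if inSigma δ (g α1 α2 β1 β2 δ w) then g α1 α2 β1 β2 δ w
        else g α1 α2 β1 β2 δ (g α1 α2 β1 β2 δ w)

/-- Case A: if `α2·β2 = α1·β1`, then every point `(1,y0;E)` with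
`max(δ, δ^(β1/α2)) < y0 < 1` lies on a period-two orbit of the Poincaré map
`g`: `g(1,y0;E) = (y0^(α2/β1), 1; R)` and `g(y0^(α2/β1), 1; R) = (1,y0;E)`.
Consequently `g∘g` is the identity on this set, and since the set is infinite
there are infinitely many period-two orbits. -/
theorem period_two_orbits_case_A
    (α1 α2 β1 β2 δ : ℝ)
    (hα1 : 0 < α1) (hα2 : 0 < α2) (hβ1 : 0 < β1) (hβ2 : 0 < β2)
    (hδ0 : 0 < δ) (hδ1 : δ < 1)
    (heq : α2 * β2 = α1 * β1) :
    (∀ y0 : ℝ, max δ (δ ^ (β1 / α2)) < y0 → y0 < 1 →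
      g α1 α2 β1 β2 δ (1, y0, E) = (y0 ^ (α2 / β1), 1, R) ∧
      g α1 α2 β1 β2 δ (y0 ^ (α2 / β1), 1, R) = (1, y0, E) ∧
      g α1 α2 β1 β2 δ (g α1 α2 β1 β2 δ (1, y0, E)) = (1, y0, E)) ∧
    {y : ℝ | max δ (δ ^ (β1 / α2)) < y ∧ y < 1}.Infinite := by
  have hexp : α1 / β2 = α2 / β1 := by
    rw [div_eq_div_iff hβ2.ne' hβ1.ne']; linarith
  have hprod : α2 / β1 * (β2 / α1) = 1 := by
    field_simp; linarith
  constructor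
  · intro y0 hlo hhi
    have hδy : δ ≤ y0 := le_of_lt (lt_of_le_of_lt (le_max_left _ _) hlo)
    have hy0 : 0 < y0 := lt_of_lt_of_le hδ0 hδy
    have h1 : δ ^ (β1 / α2) ≤ y0 := le_of_lt (lt_of_le_of_lt (le_max_right _ _) hlo)
    have hg1 : g α1 α2 β1 β2 δ (1, y0, E) = (y0 ^ (α2 / β1), 1, R) := by
      simp [g, h1]
    have hle : δ ^ (α1 / β2) ≤ y0 ^ (α2 / β1) := by
      rw [hexp]
      exact Real.rpow_le_rpow hδ0.le hδy (by positivity)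
    have hpow : (y0 ^ (α2 / β1)) ^ (β2 / α1) = y0 := by
      rw [← Real.rpow_mul hy0.le, hprod, Real.rpow_one]
    have hg2 : g α1 α2 β1 β2 δ (y0 ^ (α2 / β1), 1, R) = (1, y0, E) := by
      simp [g, hle, hpow]
    exact ⟨hg1, hg2, by rw [hg1, hg2]⟩
  · have hm1 : max δ (δ ^ (β1 / α2)) < 1 :=
      max_lt hδ1 (Real.rpow_lt_one hδ0.le hδ1 (by positivity))
    have : {y : ℝ | max δ (δ ^ (β1 / α2)) < y ∧ y < 1} = Set.Ioo (max δ (δ ^ (β1 / α2))) 1 := rfl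
    rw [this]
    exact Set.Ioo_infinite hm1
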